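/- arXiv:2002.03328 — 2 statements merged into one kernel-verified Lean document; each statement's English description precedes it below -/
import Mathlib

section
/- Let n = k·l with k, l ≥ 1, and let X be an ℝⁿ-valued random vector with law P (a probability measure on ℝⁿ ≅ (ℝˡ)ᵏ), admitting a density with respect to Lebesgue measure, and assume KL(P ‖ N(0,Iₙ)) < ∞. Write X = (X̄₁, …, X̄ₖ) in blocks of l consecutive coordinates; let P̄ᵢ be the law of the block X̄ᵢ, let P̄ᵢⱼ (1 ≤ j ≤ l) be the law of the j-th coordinate of X̄ᵢ, and let ⊗ⱼP̄ᵢⱼ be the product of the within-block one-dimensional marginals on ℝˡ. Then KL(P ‖ N(0,Iₙ)) = KL(P ‖ ⊗ᵢ₌₁ᵏ P̄ᵢ) + Σᵢ₌₁ᵏ KL(P̄ᵢ ‖ ⊗ⱼ₌₁ˡ P̄ᵢⱼ) + Σᵢ₌₁ᵏ Σⱼ₌₁ˡ KL(P̄ᵢⱼ ‖ N(0,1)), where all three summands are non-negative. -/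
/-!
Both levels of the decomposition are instances of a single identity: if `P ≪ ⊗ᵢ Qᵢ` and `P̄ᵢ`
are the marginals of `P`, then `KL(P ‖ ⊗ᵢ Qᵢ) = KL(P ‖ ⊗ᵢ P̄ᵢ) + ∑ᵢ KL(P̄ᵢ ‖ Qᵢ)`.
It comes from the chain rule `dP/d(⊗Qᵢ) = dP/d(⊗P̄ᵢ) · d(⊗P̄ᵢ)/d(⊗Qᵢ)` together with
`d(⊗P̄ᵢ)/d(⊗Qᵢ)(x) = ∏ᵢ dP̄ᵢ/dQᵢ(xᵢ)`: taking logarithms and integrating against `P` turns the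
second factor into `∑ᵢ KL(P̄ᵢ ‖ Qᵢ)`. The marginal terms are finite by data processing, so the
remaining log-likelihood ratio is integrable as a difference of integrable functions.
Applying the identity to the `k` blocks with `Qᵢ = N(0, I_l)`, and then inside each block with
`Qᵢⱼ = N(0, 1)`, gives the three terms.
-/

open MeasureTheory Real ENNReal

noncomputable def klDiv {X : Type*} [MeasurableSpace X] (P Q : Measure X) : ℝ≥0∞ :=
  open scoped Classical in
  if P ≪ Q ∧ Integrable (fun x => Real.log (P.rnDeriv Q x).toReal) P then
    ENNReal.ofReal (∫ x, Real.log (P.rnDeriv Q x).toReal ∂P)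
  else ⊤

noncomputable def stdGaussian (n : ℕ) : Measure (Fin n → ℝ) :=
  Measure.pi fun _ => ProbabilityTheory.gaussianReal 0 1

namespace MeasureTheory

open ProbabilityTheory

variable {α : Type*} [MeasurableSpace α]

lemma Measure.toReal_rnDeriv_pos {μ ν : Measure α} [SigmaFinite μ] [SigmaFinite ν] (hμν : μ ≪ ν) :
    ∀ᵐ x ∂μ, 0 < (μ.rnDeriv ν x).toReal := by
  filter_upwards [Measure.rnDeriv_pos hμν, hμν.ae_le (Measure.rnDeriv_lt_top μ ν)] with x h0 htop
  exact ENNReal.toReal_pos h0.ne' htop.ne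

lemma llr_eq_llr_add_llr {μ ν κ : Measure α} [SigmaFinite μ] [SigmaFinite ν] [SigmaFinite κ]
    (hμν : μ ≪ ν) (hνκ : ν ≪ κ) :
    llr μ κ =ᵐ[μ] llr μ ν + llr ν κ := by
  filter_upwards [(hμν.trans hνκ).ae_le (Measure.rnDeriv_mul_rnDeriv hμν),
    Measure.toReal_rnDeriv_pos hμν, hμν.ae_le (Measure.toReal_rnDeriv_pos hνκ)]
    with x hmul hμ hν
  rw [llr, ← hmul, Pi.mul_apply, ENNReal.toReal_mul, Real.log_mul hμ.ne' hν.ne']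
  rfl

lemma absolutelyContinuous_withDensity_of_ae_ne_zero {μ ν : Measure α} {f : α → ℝ≥0∞}
    (hμν : μ ≪ ν) (hf : Measurable f) (hf_ne_zero : ∀ᵐ x ∂μ, f x ≠ 0) :
    μ ≪ ν.withDensity f := by
  refine Measure.AbsolutelyContinuous.mk fun s hs hνs => ?_
  rw [withDensity_apply _ hs, lintegral_eq_zero_iff hf, Filter.EventuallyEq,
    ae_restrict_iff' hs] at hνs
  rw [measure_eq_zero_iff_ae_notMem]
  filter_upwards [hμν.ae_le hνs, hf_ne_zero] with x hzero hne hxs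
  exact hne (hzero hxs)

section Pi

variable {ι : Type*} [Fintype ι] {E : ι → Type*} [∀ i, MeasurableSpace (E i)]

lemma Measure.pi_eq_withDensity_prod_rnDeriv {μ ν : ∀ i, Measure (E i)}
    [∀ i, IsProbabilityMeasure (μ i)] [∀ i, IsProbabilityMeasure (ν i)] (h : ∀ i, μ i ≪ ν i) :
    Measure.pi μ = (Measure.pi ν).withDensity fun x => ∏ i, (μ i).rnDeriv (ν i) (x i) := by
  classical
  refine Measure.pi_eq fun s hs => ?_
  have hind : (Set.univ.pi s).indicator (fun x => ∏ i, (μ i).rnDeriv (ν i) (x i))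
      = fun x => ∏ i, (s i).indicator ((μ i).rnDeriv (ν i)) (x i) := by
    ext x
    simp [Set.indicator_apply, Fintype.prod_ite_zero]
  have hmeas (i : ι) : Measurable ((s i).indicator ((μ i).rnDeriv (ν i))) :=
    (Measure.measurable_rnDeriv _ _).indicator (hs i)
  rw [withDensity_apply _ (.univ_pi hs), ← lintegral_indicator (.univ_pi hs), hind,
    lintegral_prod_eq_prod_lintegral_of_indepFun Finset.univ _
      (iIndepFun_pi fun i => (hmeas i).aemeasurable)
      fun i => (hmeas i).comp (measurable_pi_apply i)]
  refine Finset.prod_congr rfl fun i _ => ?_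
  rw [(measurePreserving_eval ν i).lintegral_comp (hmeas i), lintegral_indicator (hs i),
    Measure.setLIntegral_rnDeriv (h i)]

lemma Measure.rnDeriv_pi {μ ν : ∀ i, Measure (E i)}
    [∀ i, IsProbabilityMeasure (μ i)] [∀ i, IsProbabilityMeasure (ν i)] (h : ∀ i, μ i ≪ ν i) :
    (Measure.pi μ).rnDeriv (Measure.pi ν) =ᵐ[Measure.pi ν]
      fun x => ∏ i, (μ i).rnDeriv (ν i) (x i) := by
  rw [Measure.pi_eq_withDensity_prod_rnDeriv h]
  exact Measure.rnDeriv_withDensity _ (Finset.measurable_prod _ fun i _ =>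
    (Measure.measurable_rnDeriv _ _).comp (measurable_pi_apply i))

lemma Measure.absolutelyContinuous_pi {μ ν : ∀ i, Measure (E i)}
    [∀ i, IsProbabilityMeasure (μ i)] [∀ i, IsProbabilityMeasure (ν i)] (h : ∀ i, μ i ≪ ν i) :
    Measure.pi μ ≪ Measure.pi ν := by
  rw [Measure.pi_eq_withDensity_prod_rnDeriv h]
  exact withDensity_absolutelyContinuous _ _

lemma llr_pi {μ ν : ∀ i, Measure (E i)}
    [∀ i, IsProbabilityMeasure (μ i)] [∀ i, IsProbabilityMeasure (ν i)] (h : ∀ i, μ i ≪ ν i) :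
    llr (Measure.pi μ) (Measure.pi ν) =ᵐ[Measure.pi μ] fun x => ∑ i, llr (μ i) (ν i) (x i) := by
  filter_upwards [(Measure.absolutelyContinuous_pi h).ae_le (Measure.rnDeriv_pi h),
    ae_all_iff.2 fun i => (measurePreserving_eval μ i).quasiMeasurePreserving.ae
      (Measure.toReal_rnDeriv_pos (h i))]
    with x hprod hpos
  rw [llr, hprod, ENNReal.toReal_prod, Real.log_prod fun i _ => (hpos i).ne']
  rfl

variable {P : Measure (∀ i, E i)} {Q : ∀ i, Measure (E i)} [∀ i, IsProbabilityMeasure (Q i)]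

lemma map_eval_absolutelyContinuous (hPQ : P ≪ Measure.pi Q) (i : ι) :
    P.map (fun x => x i) ≪ Q i :=
  (measurePreserving_eval Q i).map_eq ▸ hPQ.map (measurable_pi_apply i)

lemma absolutelyContinuous_pi_map_eval [IsProbabilityMeasure P] (hPQ : P ≪ Measure.pi Q) :
    P ≪ Measure.pi fun i => P.map fun x => x i := by
  have hmarg := map_eval_absolutelyContinuous hPQ
  have : ∀ i, IsProbabilityMeasure (P.map fun x => x i) := fun i =>
    Measure.isProbabilityMeasure_map (measurable_pi_apply i).aemeasurable
  rw [Measure.pi_eq_withDensity_prod_rnDeriv hmarg]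
  refine absolutelyContinuous_withDensity_of_ae_ne_zero hPQ
    (Finset.measurable_prod _ fun i _ =>
      (Measure.measurable_rnDeriv _ _).comp (measurable_pi_apply i)) ?_
  have hpos : ∀ i, ∀ᵐ x ∂P, (P.map fun x => x i).rnDeriv (Q i) (x i) ≠ 0 := fun i =>
    (ae_of_ae_map (measurable_pi_apply i).aemeasurable (Measure.rnDeriv_pos (hmarg i))).mono
      fun _ h => h.ne'
  filter_upwards [ae_all_iff.2 hpos] with x hx
  exact Finset.prod_ne_zero_iff.2 fun i _ => hx i

lemma llr_pi_eq_llr_pi_map_add_sum [IsProbabilityMeasure P] (hPQ : P ≪ Measure.pi Q) :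
    llr P (Measure.pi Q) =ᵐ[P] fun x =>
      llr P (Measure.pi fun i => P.map fun x => x i) x +
        ∑ i, llr (P.map fun x => x i) (Q i) (x i) := by
  have : ∀ i, IsProbabilityMeasure (P.map fun x => x i) := fun i =>
    Measure.isProbabilityMeasure_map (measurable_pi_apply i).aemeasurable
  have hmarg := map_eval_absolutelyContinuous hPQ
  have hPμ := absolutelyContinuous_pi_map_eval hPQ
  filter_upwards [llr_eq_llr_add_llr hPμ (Measure.absolutelyContinuous_pi hmarg),
    hPμ.ae_le (llr_pi hmarg)] with x hchain hpi
  rw [hchain, Pi.add_apply, hpi]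

end Pi

end MeasureTheory

section KL

variable {α : Type*} [MeasurableSpace α]

lemma klDiv_ne_top_iff {μ ν : Measure α} : klDiv μ ν ≠ ⊤ ↔ μ ≪ ν ∧ Integrable (llr μ ν) μ := by
  rw [klDiv]
  split_ifs with h
  · exact iff_of_true ENNReal.ofReal_ne_top h
  · exact iff_of_false (not_not.2 rfl) h

lemma klDiv_eq_ofReal_integral_llr {μ ν : Measure α} (hμν : μ ≪ ν)
    (h_int : Integrable (llr μ ν) μ) :
    klDiv μ ν = ENNReal.ofReal (∫ x, llr μ ν x ∂μ) :=
  if_pos ⟨hμν, h_int⟩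

lemma integral_llr_nonneg {μ ν : Measure α} [IsProbabilityMeasure μ] [IsProbabilityMeasure ν]
    (hμν : μ ≪ ν) (h_int : Integrable (llr μ ν) μ) :
    0 ≤ ∫ x, llr μ ν x ∂μ := by
  simpa using InformationTheory.integral_llr_add_sub_measure_univ_nonneg hμν h_int

lemma klDiv_pi_eq_klDiv_pi_map_add_sum {ι : Type*} [Fintype ι] {E : ι → Type*}
    [∀ i, MeasurableSpace (E i)] (P : Measure (∀ i, E i)) [IsProbabilityMeasure P]
    (Q : ∀ i, Measure (E i)) [∀ i, IsProbabilityMeasure (Q i)]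
    (hfin : klDiv P (Measure.pi Q) ≠ ⊤) :
    klDiv P (Measure.pi Q) = klDiv P (Measure.pi fun i => P.map fun x => x i) +
      ∑ i, klDiv (P.map fun x => x i) (Q i) := by
  obtain ⟨hPQ, hint⟩ := klDiv_ne_top_iff.1 hfin
  have hllr := llr_pi_eq_llr_pi_map_add_sum hPQ
  have : ∀ i, IsProbabilityMeasure (P.map fun x => x i) := fun i =>
    Measure.isProbabilityMeasure_map (measurable_pi_apply i).aemeasurable
  set Pm : ∀ i, Measure (E i) := fun i => P.map fun x => x i
  have hmarg : ∀ i, Pm i ≪ Q i := map_eval_absolutelyContinuous hPQ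
  have hPμ : P ≪ Measure.pi Pm := absolutelyContinuous_pi_map_eval hPQ
  have hint_marg (i : ι) : Integrable (llr (Pm i) (Q i)) (Pm i) := by
    simpa only [(measurePreserving_eval Q i).map_eq] using
      InformationTheory.integrable_llr_map hPQ (measurable_pi_apply i) hint
  have hint_eval (i : ι) : Integrable (fun x => llr (Pm i) (Q i) (x i)) P :=
    (integrable_map_measure (measurable_llr _ _).aestronglyMeasurable
      (measurable_pi_apply i).aemeasurable).1 (hint_marg i)
  have hint_sum : Integrable (fun x => ∑ i, llr (Pm i) (Q i) (x i)) P :=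
    integrable_finsetSum _ fun i _ => hint_eval i
  have hint_mi : Integrable (llr P (Measure.pi Pm)) P :=
    (hint.sub hint_sum).congr <| by
      filter_upwards [hllr] with x hx using (eq_sub_of_add_eq hx.symm).symm
  have hintegral : ∫ x, llr P (Measure.pi Q) x ∂P =
      ∫ x, llr P (Measure.pi Pm) x ∂P + ∑ i, ∫ y, llr (Pm i) (Q i) y ∂(Pm i) := by
    rw [integral_congr_ae hllr, integral_add hint_mi hint_sum,
      integral_finsetSum _ fun i _ => hint_eval i]
    congr 1
    exact Finset.sum_congr rfl fun i _ => (integral_map (measurable_pi_apply i).aemeasurable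
      (measurable_llr _ _).aestronglyMeasurable).symm
  have hnonneg_marg (i : ι) := integral_llr_nonneg (hmarg i) (hint_marg i)
  rw [klDiv_eq_ofReal_integral_llr hPQ hint, klDiv_eq_ofReal_integral_llr hPμ hint_mi, hintegral,
    ENNReal.ofReal_add (integral_llr_nonneg hPμ hint_mi)
      (Finset.sum_nonneg fun i _ => hnonneg_marg i),
    ENNReal.ofReal_sum_of_nonneg fun i _ => hnonneg_marg i]
  exact congrArg _ (Finset.sum_congr rfl fun i _ =>
    (klDiv_eq_ofReal_integral_llr (hmarg i) (hint_marg i)).symm)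

end KL

instance isProbabilityMeasure_stdGaussian (n : ℕ) : IsProbabilityMeasure (stdGaussian n) := by
  unfold stdGaussian
  infer_instance

theorem klDiv_stdGaussian_three_part_decomposition_general {k l : ℕ}
    (P : Measure (Fin k → Fin l → ℝ)) [IsProbabilityMeasure P]
    (hfin : klDiv P (Measure.pi fun _ : Fin k => stdGaussian l) ≠ ⊤) :
    klDiv P (Measure.pi fun _ : Fin k => stdGaussian l) =
      klDiv P (Measure.pi fun i => P.map fun x => x i) +
        (∑ i : Fin k, klDiv (P.map fun x => x i)
          (Measure.pi fun j => P.map fun x => x i j)) +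
        ∑ i : Fin k, ∑ j : Fin l,
          klDiv (P.map fun x => x i j) (ProbabilityTheory.gaussianReal 0 1) := by
  have hblocks := klDiv_pi_eq_klDiv_pi_map_add_sum P (fun _ => stdGaussian l) hfin
  have hblock_fin : ∀ i : Fin k, klDiv (P.map fun x => x i) (stdGaussian l) ≠ ⊤ := by
    rw [hblocks, ENNReal.add_ne_top, ENNReal.sum_ne_top] at hfin
    exact fun i => hfin.2 i (Finset.mem_univ i)
  have hcoords (i : Fin k) : klDiv (P.map fun x => x i) (stdGaussian l) =
      klDiv (P.map fun x => x i) (Measure.pi fun j => P.map fun x => x i j) +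
        ∑ j, klDiv (P.map fun x => x i j) (ProbabilityTheory.gaussianReal 0 1) := by
    have : IsProbabilityMeasure (P.map fun x => x i) :=
      Measure.isProbabilityMeasure_map (measurable_pi_apply i).aemeasurable
    have hmap (j : Fin l) : (P.map fun x => x i).map (fun y => y j) = P.map fun x => x i j :=
      Measure.map_map (measurable_pi_apply j) (measurable_pi_apply i)
    simpa only [hmap, stdGaussian] using klDiv_pi_eq_klDiv_pi_map_add_sum (P.map fun x => x i)
      (fun _ => ProbabilityTheory.gaussianReal 0 1) (hblock_fin i)
  rw [hblocks, Finset.sum_congr rfl fun i _ => hcoords i, Finset.sum_add_distrib, add_assoc]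

/-- Three-part decomposition of the KL divergence to the standard Gaussian on
`ℝⁿ ≅ (ℝˡ)ᵏ`: inter-group mutual information, within-group mutual information, and
dimension-wise KL divergences. -/
theorem klDiv_stdGaussian_three_part_decomposition {k l : ℕ} (hk : 1 ≤ k) (hl : 1 ≤ l)
    (P : Measure (Fin k → Fin l → ℝ)) [IsProbabilityMeasure P]
    (hac : P ≪ (volume : Measure (Fin k → Fin l → ℝ)))
    (hfin : klDiv P (Measure.pi fun _ : Fin k => stdGaussian l) ≠ ⊤) :
    klDiv P (Measure.pi fun _ : Fin k => stdGaussian l) =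
      klDiv P (Measure.pi fun i => P.map fun x => x i) +
        (∑ i : Fin k, klDiv (P.map fun x => x i)
          (Measure.pi fun j => P.map fun x => x i j)) +
        ∑ i : Fin k, ∑ j : Fin l,
          klDiv (P.map fun x => x i j) (ProbabilityTheory.gaussianReal 0 1) :=
  klDiv_stdGaussian_three_part_decomposition_general P hfin
end

section
/- Let n = k·l with k, l ≥ 1, and let X be an ℝⁿ-valued random vector with law P (a probability measure on ℝⁿ ≅ (ℝˡ)ᵏ), admitting a density with respect to Lebesgue measure, and assume KL(P ‖ N(0,Iₙ)) < ∞. With Pᵢ the one-dimensional marginals (1 ≤ i ≤ n), P̄ᵢ the l-dimensional block marginals, and P̄ᵢⱼ the one-dimensional marginals within block i, the total correlation satisfies the additive decomposition KL(P ‖ ⊗ᵢ₌₁ⁿ Pᵢ) = KL(P ‖ ⊗ᵢ₌₁ᵏ P̄ᵢ) + Σᵢ₌₁ᵏ KL(P̄ᵢ ‖ ⊗ⱼ₌₁ˡ P̄ᵢⱼ), i.e. I_d[P] = I_g[P] + I_l[P], and consequently the group-wise KL divergence satisfies Σᵢ₌₁ᵏ KL(P̄ᵢ ‖ N(0,I_l))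 = Σᵢ₌₁ᵏ KL(P̄ᵢ ‖ ⊗ⱼ₌₁ˡ P̄ᵢⱼ) + Σᵢ₌₁ⁿ KL(Pᵢ ‖ N(0,1)), i.e. D_g[P] = I_l[P] + D_d[P]. -/
open MeasureTheory Real ENNReal

/-!
Both identities are instances of one chain rule: for a probability measure `P` on a finite
product and probability measures `νᵢ` on the factors,
`KL(P ‖ ⊗ᵢ νᵢ) = KL(P ‖ ⊗ᵢ Pᵢ) + Σᵢ KL(Pᵢ ‖ νᵢ)` in `[0, ∞]`.
For two factors it is Mathlib's chain rule for composition products, applied to the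
disintegration `ρ = ρ.fst ⊗ₘ ρ.condKernel` once in each coordinate order; the general case
follows by induction, splitting off the first coordinate. Taking the blocks as factors and
`νᵢ = ⊗ⱼ P̄ᵢⱼ` gives `I_d = I_g + I_l`; taking the coordinates of one block as factors and
`νⱼ = N(0,1)`, then summing over the blocks, gives `D_g = I_l + D_d`.
-/

instance MeasureTheory.Measure.isProbabilityMeasure_map_eval {ι X : Type*} [MeasurableSpace X]
    (P : Measure (ι → X)) [IsProbabilityMeasure P] (i : ι) :
    IsProbabilityMeasure (P.map fun x => x i) :=
  Measure.isProbabilityMeasure_map (measurable_pi_apply i).aemeasurable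

lemma MeasureTheory.Measure.eq_of_subsingleton {X : Type*} [MeasurableSpace X] [Subsingleton X]
    (μ ν : Measure X) [IsProbabilityMeasure μ] [IsProbabilityMeasure ν] : μ = ν :=
  Measure.ext fun s _ => Subsingleton.set_cases (p := fun s => μ s = ν s) (by simp) (by simp) s

namespace InformationTheory

variable {X Y : Type*} [MeasurableSpace X] [MeasurableSpace Y]

lemma klDiv_map_measurableEquiv (e : X ≃ᵐ Y) (μ ν : Measure X) [IsFiniteMeasure μ]
    [IsFiniteMeasure ν] : klDiv (μ.map e) (ν.map e) = klDiv μ ν := by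
  refine le_antisymm (klDiv_map_le μ ν e.measurable) ?_
  simpa [Measure.map_map e.symm.measurable e.measurable] using
    klDiv_map_le (μ.map e) (ν.map e) e.symm.measurable

lemma klDiv_map_swap (ρ σ : Measure (X × Y)) [IsFiniteMeasure ρ] [IsFiniteMeasure σ] :
    klDiv (ρ.map Prod.swap) (σ.map Prod.swap) = klDiv ρ σ :=
  klDiv_map_measurableEquiv MeasurableEquiv.prodComm ρ σ

lemma klDiv_prod_eq_klDiv_fst_add [StandardBorelSpace Y] [Nonempty Y] (ρ : Measure (X × Y))
    [IsFiniteMeasure ρ] (μ : Measure X) [IsFiniteMeasure μ] (ν : Measure Y)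
    [IsProbabilityMeasure ν] :
    klDiv ρ (μ.prod ν) = klDiv ρ.fst μ + klDiv ρ (ρ.fst.prod ν) := by
  have h := klDiv_compProd_eq_add ρ.fst μ ρ.condKernel (ProbabilityTheory.Kernel.const X ν)
  rwa [Measure.compProd_const, Measure.compProd_const, ρ.disintegrate] at h

lemma klDiv_prod_eq_add [StandardBorelSpace X] [Nonempty X] [StandardBorelSpace Y] [Nonempty Y]
    (ρ : Measure (X × Y)) [IsProbabilityMeasure ρ] (μ : Measure X) [IsProbabilityMeasure μ]
    (ν : Measure Y) [IsProbabilityMeasure ν] :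
    klDiv ρ (μ.prod ν) = klDiv ρ (ρ.fst.prod ρ.snd) + klDiv ρ.fst μ + klDiv ρ.snd ν := by
  have hswap : klDiv ρ (ρ.fst.prod ν) = klDiv ρ.snd ν + klDiv ρ (ρ.fst.prod ρ.snd) := by
    rw [← klDiv_map_swap ρ (ρ.fst.prod ν), ← klDiv_map_swap ρ (ρ.fst.prod ρ.snd),
      Measure.prod_swap, Measure.prod_swap, klDiv_prod_eq_klDiv_fst_add, Measure.fst_map_swap]
  rw [klDiv_prod_eq_klDiv_fst_add, hswap]
  ring

theorem klDiv_pi_eq_add [StandardBorelSpace X] [Nonempty X] {n : ℕ}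
    (P : Measure (Fin n → X)) [IsProbabilityMeasure P]
    (ν : Fin n → Measure X) [∀ i, IsProbabilityMeasure (ν i)] :
    klDiv P (Measure.pi ν) = klDiv P (Measure.pi fun i => P.map fun x => x i) +
      ∑ i, klDiv (P.map fun x => x i) (ν i) := by
  induction n with
  | zero =>
    rw [Measure.eq_of_subsingleton (Measure.pi ν) P,
      Measure.eq_of_subsingleton (Measure.pi fun i => P.map fun x => x i) P]
    simp
  | succ n ih =>
    let e := MeasurableEquiv.piFinSuccAbove (fun _ : Fin (n + 1) => X) 0
    have : IsProbabilityMeasure (P.map e) :=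
      Measure.isProbabilityMeasure_map e.measurable.aemeasurable
    have hfst : (P.map e).fst = P.map fun x => x 0 := by
      rw [Measure.fst, Measure.map_map measurable_fst e.measurable]; rfl
    have hsnd : ∀ j, (P.map e).snd.map (fun y => y j) = P.map fun x => x j.succ := by
      intro j
      rw [Measure.snd, Measure.map_map measurable_snd e.measurable,
        Measure.map_map (measurable_pi_apply j) (measurable_snd.comp e.measurable)]
      rfl
    have key : ∀ (ν : Fin (n + 1) → Measure X) [∀ i, IsProbabilityMeasure (ν i)],
        klDiv P (Measure.pi ν) = klDiv (P.map e) ((P.map e).fst.prod (P.map e).snd) +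
          klDiv (P.map e).snd (Measure.pi fun j => P.map fun x => x j.succ) +
          ∑ i, klDiv (P.map fun x => x i) (ν i) := by
      intro ν _
      rw [← klDiv_map_measurableEquiv e, (measurePreserving_piFinSuccAbove ν 0).map_eq]
      simp only [Fin.succAbove_zero]
      rw [klDiv_prod_eq_add, ih, Fin.sum_univ_succ]
      simp only [hsnd, hfst]
      ring
    -- for `ν = (P.map fun x => x i)` the sum vanishes, so the other two terms of `key` add up to
    -- the total correlation of `P`
    rw [key ν, key fun i => P.map fun x => x i]
    simp [klDiv_self]

end InformationTheory

lemma klDiv_eq_informationTheory_klDiv {X : Type*} [MeasurableSpace X] (P Q : Measure X)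
    [IsProbabilityMeasure P] [IsProbabilityMeasure Q] :
    klDiv P Q = InformationTheory.klDiv P Q := by
  simp only [klDiv, InformationTheory.klDiv_def, llr_def, probReal_univ,
    add_sub_cancel_right]
  -- the two `if`s differ only in their `Decidable` instances
  congr

theorem totalCorrelation_group_decomposition_general {k l : ℕ}
    (P : Measure (Fin k → Fin l → ℝ)) [IsProbabilityMeasure P] :
    klDiv P (Measure.pi fun i => Measure.pi fun j => P.map fun x => x i j) =
      klDiv P (Measure.pi fun i => P.map fun x => x i) +
        ∑ i : Fin k, klDiv (P.map fun x => x i)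
          (Measure.pi fun j => P.map fun x => x i j) ∧
    (∑ i : Fin k, klDiv (P.map fun x => x i) (stdGaussian l)) =
      (∑ i : Fin k, klDiv (P.map fun x => x i)
        (Measure.pi fun j => P.map fun x => x i j)) +
        ∑ i : Fin k, ∑ j : Fin l,
          klDiv (P.map fun x => x i j) (ProbabilityTheory.gaussianReal 0 1) := by
  have hblock : ∀ i j, (P.map fun x => x i).map (fun y => y j) = P.map fun x => x i j :=
    fun i j => Measure.map_map (measurable_pi_apply j) (measurable_pi_apply i)
  have : ∀ i j, IsProbabilityMeasure (P.map fun x => x i j) := fun i j => hblock i j ▸ inferInstance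
  have : IsProbabilityMeasure (stdGaussian l) := by unfold stdGaussian; infer_instance
  simp only [klDiv_eq_informationTheory_klDiv]
  constructor
  · exact InformationTheory.klDiv_pi_eq_add P _
  · rw [← Finset.sum_add_distrib]
    refine Finset.sum_congr rfl fun i _ => ?_
    rw [stdGaussian, InformationTheory.klDiv_pi_eq_add (P.map fun x => x i)]
    simp only [hblock]

/-- Additivity of the total correlation across a grouping of the coordinates
(`I_d = I_g + I_l`), and the induced decomposition of the group-wise KL divergence
(`D_g = I_l + D_d`). -/
theorem totalCorrelation_group_decomposition {k l : ℕ} (hk : 1 ≤ k) (hl : 1 ≤ l)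
    (P : Measure (Fin k → Fin l → ℝ)) [IsProbabilityMeasure P]
    (hac : P ≪ (volume : Measure (Fin k → Fin l → ℝ)))
    (hfin : klDiv P (Measure.pi fun _ : Fin k => stdGaussian l) ≠ ⊤) :
    klDiv P (Measure.pi fun i => Measure.pi fun j => P.map fun x => x i j) =
      klDiv P (Measure.pi fun i => P.map fun x => x i) +
        ∑ i : Fin k, klDiv (P.map fun x => x i)
          (Measure.pi fun j => P.map fun x => x i j) ∧
    (∑ i : Fin k, klDiv (P.map fun x => x i) (stdGaussian l)) =
      (∑ i : Fin k, klDiv (P.map fun x => x i)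
        (Measure.pi fun j => P.map fun x => x i j)) +
        ∑ i : Fin k, ∑ j : Fin l,
          klDiv (P.map fun x => x i j) (ProbabilityTheory.gaussianReal 0 1) :=
  totalCorrelation_group_decomposition_general P
end
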